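/- arXiv:1606.08134 — 2 statements merged into one kernel-verified Lean document; each statement's English description precedes it below -/
import Mathlib

section
/- If f = h + conj(g) ∈ W⁰_H(α) with α ≥ 0, then for every ε with |ε| = 1 and every z with |z| < 1/2, Re((s₃(h) + ε s₃(g))'(z) + αz (s₃(h) + ε s₃(g))''(z)) > 1/4, where s₃ denotes the third partial sum of the Taylor series. -/
/-!
Put `P = (h' + α z h'') + ε (g' + α z g'')`. The defining inequality of `W⁰_H(α)` together with
`|ε| = 1` gives `Re P > 0` on the disk, and `P(0) = 1`. The quadratic Taylor polynomial of `P`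
at `0` is exactly `(s₃(h) + ε s₃(g))' + α z (s₃(h) + ε s₃(g))''`. Writing `P = (1 + zφ)/(1 - zφ)`
with `φ` a self-map of the closed disk (Schwarz), the Taylor coefficients of `P` are `2c₁` and
`2c₁² + 2c₂` with `c₁ = φ(0)`, `c₂ = φ'(0)` and `|c₂| ≤ 1 - |c₁|²` (Schwarz–Pick), and for
`|z| < 1/2` the real part of `1 + 2c₁z + (2c₁² + 2c₂)z²` is at least
`1 + 2x + 4x² - 2|z|² > 1/4`, where `x = Re(c₁z)`.
-/

open Metric Set Complex ComplexConjugate Filter Topology NNReal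
open scoped ENNReal

theorem re_add_mul_pos_of_norm_lt {u v ε : ℂ} (hε : ‖ε‖ = 1) (h : ‖v‖ < u.re) :
    0 < (u + ε * v).re := by
  have := neg_le_of_abs_le (Complex.abs_re_le_norm (ε * v))
  rw [norm_mul, hε, one_mul] at this
  rw [add_re]
  linarith

theorem iteratedDeriv_id_mul_zero {𝕜 : Type*} [NontriviallyNormedField 𝕜] {f : 𝕜 → 𝕜} {k : ℕ}
    (hf : ContDiffAt 𝕜 k f 0) :
    iteratedDeriv k (fun w => w * f w) 0 = k * iteratedDeriv (k - 1) f 0 := by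
  rw [iteratedDeriv_fun_mul (f := fun w => w) contDiffAt_id hf, Finset.sum_eq_single 1]
  · simp [iteratedDeriv_fun_id_zero]
  · intro i _ hi
    simp [iteratedDeriv_fun_id_zero, hi]
  · intro h1
    have : k = 0 := by simpa using h1
    simp [this]

theorem norm_sub_one_lt_norm_add_one {p : ℂ} (hp : 0 < p.re) : ‖p - 1‖ < ‖p + 1‖ := by
  rw [← sq_lt_sq₀ (norm_nonneg _) (norm_nonneg _), Complex.sq_norm, Complex.sq_norm,
    Complex.normSq_apply, Complex.normSq_apply]
  simp only [sub_re, one_re, sub_im, one_im, sub_zero, add_re, add_im, add_zero]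
  nlinarith

theorem norm_sub_le_norm_one_sub_conj_mul {c u : ℂ} (hc : ‖c‖ ≤ 1) (hu : ‖u‖ ≤ 1) :
    ‖u - c‖ ≤ ‖1 - conj c * u‖ := by
  have key : ‖1 - conj c * u‖ ^ 2 - ‖u - c‖ ^ 2 = (1 - ‖c‖ ^ 2) * (1 - ‖u‖ ^ 2) := by
    simp only [Complex.sq_norm, Complex.normSq_apply, sub_re, one_re, mul_re, conj_re, conj_im,
      sub_im, one_im, mul_im]
    ring
  have : 0 ≤ (1 - ‖c‖ ^ 2) * (1 - ‖u‖ ^ 2) := by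
    apply mul_nonneg <;> nlinarith [norm_nonneg c, norm_nonneg u]
  rw [← sq_le_sq₀ (norm_nonneg _) (norm_nonneg _)]
  linarith

theorem norm_deriv_le_one_sub_sq_norm {φ : ℂ → ℂ} (hd : DifferentiableOn ℂ φ (ball 0 1))
    (hmaps : MapsTo φ (ball 0 1) (closedBall 0 1)) : ‖deriv φ 0‖ ≤ 1 - ‖φ 0‖ ^ 2 := by
  have h0 : (0 : ℂ) ∈ ball (0 : ℂ) 1 := mem_ball_self one_pos
  have hφ : ∀ w ∈ ball (0 : ℂ) 1, ‖φ w‖ ≤ 1 := fun w hw => by simpa using hmaps hw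
  generalize hc0 : φ 0 = c
  rcases (hc0 ▸ hφ 0 h0).lt_or_eq with hc | hc
  · have hden : ∀ w ∈ ball (0 : ℂ) 1, 1 - conj c * φ w ≠ 0 := by
      intro w hw h1
      have : ‖conj c * φ w‖ < 1 := by
        rw [norm_mul, RCLike.norm_conj]
        nlinarith [hφ w hw, norm_nonneg c, norm_nonneg (φ w)]
      simp [← sub_eq_zero.mp h1] at this
    -- compose with the disk automorphism sending `c` to `0` and apply the Cauchy estimate
    set ψ := fun w => (φ w - c) / (1 - conj c * φ w)
    have hψd : DifferentiableOn ℂ ψ (ball 0 1) :=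
      (hd.sub_const c).div ((hd.const_mul _).const_sub 1) hden
    have hψmaps : MapsTo ψ (ball 0 1) (closedBall (ψ 0) 1) := by
      intro w hw
      rw [mem_closedBall, dist_eq_norm]
      simpa [ψ, hc0, norm_div] using
        div_le_one_of_le₀ (norm_sub_le_norm_one_sub_conj_mul hc.le (hφ w hw)) (norm_nonneg _)
    have hψ' : deriv ψ 0 = deriv φ 0 / (1 - ‖c‖ ^ 2) := by
      have hφ' := (hd.differentiableAt (isOpen_ball.mem_nhds h0)).hasDerivAt
      have hψ' : HasDerivAt ψ _ 0 :=
        (hφ'.sub_const c).div ((hφ'.const_mul (conj c)).const_sub 1) (hden 0 h0)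
      rw [hψ'.deriv, hc0, ← Complex.conj_mul']
      have := hc0 ▸ hden 0 h0
      field_simp
      ring
    have hpos : 0 < 1 - ‖c‖ ^ 2 := by nlinarith [norm_nonneg c]
    have := norm_deriv_le_div_of_mapsTo_ball hψd hψmaps one_pos
    rwa [hψ', div_one, ← ofReal_pow, ← ofReal_one, ← ofReal_sub, norm_div,
      Complex.norm_of_nonneg hpos.le, div_le_one hpos] at this
  · have hmax : IsMaxOn (norm ∘ φ) (ball 0 1) 0 := fun w hw => by
      simpa [hc0, hc] using hφ w hw
    have hconst : φ =ᶠ[𝓝 0] fun _ => c :=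
      Filter.eventuallyEq_of_mem (isOpen_ball.mem_nhds h0) <| hc0 ▸
        eqOn_of_isPreconnected_of_isMaxOn_norm (convex_ball 0 1).isPreconnected isOpen_ball hd h0
          hmax
    simp [hconst.deriv_eq, hc]

theorem exists_taylor_coeff_bound_of_re_pos {P : ℂ → ℂ} (hd : DifferentiableOn ℂ P (ball 0 1))
    (h0 : P 0 = 1) (hre : ∀ w ∈ ball (0 : ℂ) 1, 0 < (P w).re) :
    ∃ c₁ c₂ : ℂ, ‖c₂‖ ≤ 1 - ‖c₁‖ ^ 2 ∧ deriv P 0 = 2 * c₁ ∧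
      iteratedDeriv 2 P 0 = 4 * c₁ ^ 2 + 4 * c₂ := by
  have hball : ball (0 : ℂ) 1 ∈ 𝓝 0 := ball_mem_nhds 0 one_pos
  have hne : ∀ w ∈ ball (0 : ℂ) 1, P w + 1 ≠ 0 := fun w hw h => by
    have := hre w hw
    norm_num [eq_neg_of_add_eq_zero_left h] at this
  set ω := fun w => (P w - 1) / (P w + 1)
  have hωd : DifferentiableOn ℂ ω (ball 0 1) := (hd.sub_const 1).div (hd.add_const 1) hne
  have hωmaps : MapsTo ω (ball 0 1) (closedBall (ω 0) 1) := fun w hw => by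
    simpa [ω, h0, norm_div] using div_le_one_of_le₀
      (norm_sub_one_lt_norm_add_one (hre w hw)).le (norm_nonneg _)
  set φ := dslope ω 0
  have hφd : DifferentiableOn ℂ φ (ball 0 1) := (differentiableOn_dslope hball).mpr hωd
  have hφmaps : MapsTo φ (ball 0 1) (closedBall 0 1) := fun w hw => by
    simpa using norm_dslope_le_div_of_mapsTo_ball hωd hωmaps hw
  set Θ := fun w => φ w * (P w + 1)
  have hP : P =ᶠ[𝓝 0] fun w => 1 + w * Θ w := by
    filter_upwards [hball] with w hw
    have hωφ : w * φ w = ω w := by simpa [ω, h0] using sub_smul_dslope ω 0 w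
    rw [← mul_assoc, hωφ]
    simp only [ω]
    field_simp [hne w hw]
    ring
  have hΘ : DifferentiableOn ℂ Θ (ball 0 1) := hφd.mul (hd.add_const 1)
  have hk : ∀ k, 0 < k → iteratedDeriv k P 0 = k * iteratedDeriv (k - 1) Θ 0 := fun k hk => by
    rw [hP.iteratedDeriv_eq, iteratedDeriv_const_add hk,
      iteratedDeriv_id_mul_zero ((hΘ.analyticAt hball).contDiffAt)]
  have hP1 : deriv P 0 = 2 * φ 0 := by
    have := hk 1 one_pos
    simp only [iteratedDeriv_one, Nat.cast_one, Nat.sub_self, iteratedDeriv_zero, Θ, h0] at this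
    linear_combination this
  refine ⟨φ 0, deriv φ 0, norm_deriv_le_one_sub_sq_norm hφd hφmaps, hP1, ?_⟩
  rw [hk 2 two_pos]
  simp only [Nat.cast_ofNat, Nat.add_one_sub_one, iteratedDeriv_one, Θ]
  rw [deriv_fun_mul (hφd.differentiableAt hball) ((hd.differentiableAt hball).add_const 1),
    deriv_add_const, hP1, h0]
  ring

theorem one_quarter_lt_re_of_norm_le {c₁ c₂ z : ℂ} (hc : ‖c₂‖ ≤ 1 - ‖c₁‖ ^ 2)
    (hz : ‖z‖ < 1 / 2) : 1 / 4 < (1 + 2 * c₁ * z + (2 * c₁ ^ 2 + 2 * c₂) * z ^ 2).re := by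
  set s := c₁ * z
  have hre : (1 + 2 * c₁ * z + (2 * c₁ ^ 2 + 2 * c₂) * z ^ 2).re
      = 1 + 2 * s.re + 2 * (s.re ^ 2 - s.im ^ 2) + 2 * (c₂ * z ^ 2).re := by
    rw [show 1 + 2 * c₁ * z + (2 * c₁ ^ 2 + 2 * c₂) * z ^ 2
      = 1 + 2 * s + 2 * s ^ 2 + 2 * (c₂ * z ^ 2) by ring]
    simp [sq]
  have hs : s.re ^ 2 + s.im ^ 2 = ‖c₁‖ ^ 2 * ‖z‖ ^ 2 := by
    rw [← mul_pow, ← norm_mul, Complex.sq_norm, Complex.normSq_apply]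
    ring
  have hc₂ : -(‖c₂‖ * ‖z‖ ^ 2) ≤ (c₂ * z ^ 2).re := by
    have := neg_le_of_abs_le (Complex.abs_re_le_norm (c₂ * z ^ 2))
    rwa [norm_mul, norm_pow] at this
  nlinarith [sq_nonneg (4 * s.re + 1), norm_nonneg c₂, norm_nonneg z, sq_nonneg ‖c₁‖]

theorem one_quarter_lt_re_taylor_of_re_pos {P : ℂ → ℂ} (hd : DifferentiableOn ℂ P (ball 0 1))
    (h0 : P 0 = 1) (hre : ∀ w ∈ ball (0 : ℂ) 1, 0 < (P w).re) {z : ℂ} (hz : ‖z‖ < 1 / 2) :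
    1 / 4 < (P 0 + deriv P 0 * z + iteratedDeriv 2 P 0 / 2 * z ^ 2).re := by
  obtain ⟨c₁, c₂, hc, h1, h2⟩ := exists_taylor_coeff_bound_of_re_pos hd h0 hre
  convert one_quarter_lt_re_of_norm_le hc hz using 2
  rw [h0, h1, h2]
  ring

theorem hasFPowerSeriesOnBall_ofScalars_of_hasSum {a : ℕ → ℂ} {f : ℂ → ℂ} {r : ℝ≥0}
    (hr : 0 < r) (hf : ∀ z ∈ ball (0 : ℂ) r, HasSum (fun n => a n * z ^ n) (f z)) :
    HasFPowerSeriesOnBall f (FormalMultilinearSeries.ofScalars ℂ a) 0 r := by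
  have happly : ∀ n y, FormalMultilinearSeries.ofScalars ℂ a n (fun _ => y) = a n * y ^ n := by
    simp [mul_comm]
  refine ⟨?_, by exact_mod_cast hr, fun {y} hy => ?_⟩
  · refine ENNReal.le_of_forall_nnreal_lt fun t ht => ?_
    have ht' : ((t : ℝ) : ℂ) ∈ ball (0 : ℂ) r := by simpa using ht
    refine FormalMultilinearSeries.le_radius_of_tendsto _ (l := 0) ?_
    simpa [FormalMultilinearSeries.ofScalars_norm] using
      (hf _ ht').summable.tendsto_atTop_zero.norm
  · simpa [happly] using hf y (by simpa using hy)

theorem HasFPowerSeriesAt.iteratedDeriv_eq_factorial_mul {𝕜 : Type*}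
    [NontriviallyNormedField 𝕜] [CompleteSpace 𝕜] [CharZero 𝕜] {f : 𝕜 → 𝕜} {a : ℕ → 𝕜} {x : 𝕜}
    (hf : HasFPowerSeriesAt f (FormalMultilinearSeries.ofScalars 𝕜 a) x) (n : ℕ) :
    iteratedDeriv n f x = n.factorial * a n := by
  have := congrFun (FormalMultilinearSeries.ofScalars_series_injective 𝕜 𝕜
    (hf.eq_formalMultilinearSeries hf.analyticAt.hasFPowerSeriesAt)) n
  rw [eq_div_iff (by exact_mod_cast n.factorial_ne_zero)] at this
  rw [← this, mul_comm]

/-- `f = h + conj g ∈ W⁰_H(α)` means `|derivOp α g| < Re (derivOp α h)` on the disk. -/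
noncomputable def derivOp (α : ℂ) (u : ℂ → ℂ) : ℂ → ℂ :=
  fun w => deriv u w + α * w * deriv (deriv u) w

theorem AnalyticAt.derivOp {u : ℂ → ℂ} {w : ℂ} (hu : AnalyticAt ℂ u w) (α : ℂ) :
    AnalyticAt ℂ (derivOp α u) w :=
  hu.deriv.add ((analyticAt_const.mul analyticAt_id).mul hu.deriv.deriv)

theorem iteratedDeriv_derivOp_zero {u : ℂ → ℂ} (hu : AnalyticAt ℂ u 0) (α : ℂ) (k : ℕ) :
    iteratedDeriv k (derivOp α u) 0 = (1 + k * α) * iteratedDeriv (k + 1) u 0 := by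
  have hu₂ : ContDiffAt ℂ k (deriv (deriv u)) 0 := hu.deriv.deriv.contDiffAt
  unfold derivOp
  simp only [mul_assoc]
  rw [iteratedDeriv_fun_add hu.deriv.contDiffAt (by fun_prop), iteratedDeriv_const_mul_field,
    iteratedDeriv_id_mul_zero hu₂, ← iteratedDeriv_succ']
  rcases k with _ | k
  · simp
  · rw [Nat.add_sub_cancel, ← iteratedDeriv_succ', ← iteratedDeriv_succ']
    ring

theorem iteratedDeriv_derivOp_add_smul_zero {a b : ℕ → ℂ} {h g : ℂ → ℂ}
    (hh : HasFPowerSeriesAt h (FormalMultilinearSeries.ofScalars ℂ a) 0)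
    (hg : HasFPowerSeriesAt g (FormalMultilinearSeries.ofScalars ℂ b) 0) (α ε : ℂ) (k : ℕ) :
    iteratedDeriv k (derivOp α h + ε • derivOp α g) 0
      = (1 + k * α) * (k + 1).factorial * (a (k + 1) + ε * b (k + 1)) := by
  rw [iteratedDeriv_add (hh.analyticAt.derivOp α).contDiffAt
      (hg.analyticAt.derivOp α).const_smul.contDiffAt, iteratedDeriv_const_smul_field,
    iteratedDeriv_derivOp_zero hh.analyticAt, iteratedDeriv_derivOp_zero hg.analyticAt,
    hh.iteratedDeriv_eq_factorial_mul, hg.iteratedDeriv_eq_factorial_mul, smul_eq_mul]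
  ring

theorem derivOp_sum_Icc_one_three (α : ℂ) (c : ℕ → ℂ) (z : ℂ) :
    derivOp α (fun w => ∑ k ∈ Finset.Icc 1 3, c k * w ^ k) z
      = c 1 + 2 * (1 + α) * c 2 * z + 3 * (1 + 2 * α) * c 3 * z ^ 2 := by
  have hs : deriv (fun w : ℂ => ∑ k ∈ Finset.Icc 1 3, c k * w ^ k)
      = fun w => ∑ k ∈ Finset.Icc 1 3, c k * (k * w ^ (k - 1)) := by
    funext w
    rw [deriv_fun_sum fun k _ => by fun_prop]
    simp
  have hs2 : deriv (fun w : ℂ => ∑ k ∈ Finset.Icc 1 3, c k * (k * w ^ (k - 1))) z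
      = ∑ k ∈ Finset.Icc 1 3, c k * (k * ((k - 1 : ℕ) * z ^ (k - 1 - 1))) := by
    rw [deriv_fun_sum fun k _ => by fun_prop]
    simp
  unfold derivOp
  rw [hs, hs2]
  simp only [Nat.reduceAdd, Nat.one_le_ofNat, Finset.sum_Icc_succ_top, Finset.Icc_self,
    Finset.sum_singleton, Nat.cast_one, tsub_self, pow_zero, mul_one, Nat.cast_ofNat,
    Nat.add_one_sub_one, pow_one, CharP.cast_eq_zero, zero_tsub, mul_zero, zero_add]
  ring

theorem stmt_14_general (α : ℝ) (a b : ℕ → ℂ) (h g : ℂ → ℂ)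
    (ha1 : a 1 = 1) (hb1 : b 1 = 0)
    (hrep : ∀ z ∈ Metric.ball (0 : ℂ) 1, HasSum (fun n => a n * z ^ n) (h z))
    (grep : ∀ z ∈ Metric.ball (0 : ℂ) 1, HasSum (fun n => b n * z ^ n) (g z))
    (hf : ∀ z ∈ Metric.ball (0 : ℂ) 1,
        ‖deriv g z + (α : ℂ) * z * deriv (deriv g) z‖
          < (deriv h z + (α : ℂ) * z * deriv (deriv h) z).re) :
    ∀ ε : ℂ, ‖ε‖ = 1 → ∀ z : ℂ, ‖z‖ < 1 / 2 →
      (1 : ℝ) / 4 <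
        (deriv (fun w : ℂ => ∑ k ∈ Finset.Icc 1 3, (a k + ε * b k) * w ^ k) z
          + (α : ℂ) * z *
            deriv (deriv (fun w : ℂ => ∑ k ∈ Finset.Icc 1 3, (a k + ε * b k) * w ^ k)) z).re := by
  intro ε hε z hz
  have hps := hasFPowerSeriesOnBall_ofScalars_of_hasSum (r := 1) one_pos (by simpa using hrep)
  have gps := hasFPowerSeriesOnBall_ofScalars_of_hasSum (r := 1) one_pos (by simpa using grep)
  have hmem : ∀ w ∈ ball (0 : ℂ) 1, w ∈ eball (0 : ℂ) ((1 : ℝ≥0) : ℝ≥0∞) := fun w hw => by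
    rwa [eball_coe, NNReal.coe_one]
  have hcoeff := iteratedDeriv_derivOp_add_smul_zero hps.hasFPowerSeriesAt
    gps.hasFPowerSeriesAt α ε
  set P := derivOp α h + ε • derivOp α g
  have hPan : ∀ w ∈ ball (0 : ℂ) 1, AnalyticAt ℂ P w := fun w hw =>
    ((hps.analyticAt_of_mem (hmem w hw)).derivOp α).add
      ((gps.analyticAt_of_mem (hmem w hw)).derivOp α).const_smul
  have hre : ∀ w ∈ ball (0 : ℂ) 1, 0 < (P w).re := fun w hw =>
    re_add_mul_pos_of_norm_lt hε (hf w hw)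
  have hP0 : P 0 = 1 := by simpa [ha1, hb1] using hcoeff 0
  show 1 / 4 < (derivOp α _ z).re
  convert one_quarter_lt_re_taylor_of_re_pos (fun w hw => (hPan w hw).differentiableWithinAt)
    hP0 hre hz using 2
  rw [derivOp_sum_Icc_one_three, hP0, ← iteratedDeriv_one, hcoeff 1, hcoeff 2, ha1, hb1]
  push_cast
  ring

/-- for f ∈ W⁰_H(α), the third partial sums satisfy
Re((s₃(h) + ε s₃(g))'(z) + αz(s₃(h) + ε s₃(g))''(z)) > 1/4 for |z| < 1/2, |ε| = 1. -/
theorem stmt_14 (α : ℝ) (hα : 0 ≤ α) (a b : ℕ → ℂ) (h g : ℂ → ℂ)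
    (ha0 : a 0 = 0) (ha1 : a 1 = 1) (hb0 : b 0 = 0) (hb1 : b 1 = 0)
    (hrep : ∀ z ∈ Metric.ball (0 : ℂ) 1, HasSum (fun n => a n * z ^ n) (h z))
    (grep : ∀ z ∈ Metric.ball (0 : ℂ) 1, HasSum (fun n => b n * z ^ n) (g z))
    (hf : ∀ z ∈ Metric.ball (0 : ℂ) 1,
        ‖deriv g z + (α : ℂ) * z * deriv (deriv g) z‖
          < (deriv h z + (α : ℂ) * z * deriv (deriv h) z).re) :
    ∀ ε : ℂ, ‖ε‖ = 1 → ∀ z : ℂ, ‖z‖ < 1 / 2 →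
      (1 : ℝ) / 4 <
        (deriv (fun w : ℂ => ∑ k ∈ Finset.Icc 1 3, (a k + ε * b k) * w ^ k) z
          + (α : ℂ) * z *
            deriv (deriv (fun w : ℂ => ∑ k ∈ Finset.Icc 1 3, (a k + ε * b k) * w ^ k)) z).re :=
  stmt_14_general α a b h g ha1 hb1 hrep grep hf
end

section
/- If f = h + conj(g) ∈ W⁰_H(α), then for each q ≥ 2 the partial sum s_{1,q}(f)(z) = z + conj(Σ_{n=2}^q b_n z^n), viewed as a harmonic function on the disk |z| < 1/2, satisfies the W⁰_H(α) condition there: 1 = Re((z)' + αz(z)'') > |s_q(g)'(z) + αz s_q(g)''(z)| for all |z| < 1/2. -/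
/-! By the Cauchy estimate on circles of radius `R < 1`, the `n`-th coefficient of
`Q = g' + α z g''`, namely `(n+1)(1+αn) b_{n+1}`, is at most `R⁻ⁿ` times the circle average of
`‖Q‖`. Since `‖Q‖ < Re P` for `P = h' + α z h''` and `Re P` has the mean value `Re P(0) = a₁ = 1`,
every such coefficient has norm at most `1`. Applying `F ↦ F' + α z F''` to `s_q(g)` gives
`∑_{n=2}^q n(1+α(n-1)) b_n z^{n-1}`, which is therefore bounded by
`∑_{k≥1} ‖z‖^k = ‖z‖/(1-‖z‖) < 1` when `‖z‖ < 1/2`. -/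

open FormalMultilinearSeries Metric Finset
open scoped NNReal ENNReal

theorem hasFPowerSeriesOnBall_ofScalars_iff {F : ℂ → ℂ} {c : ℕ → ℂ} {r : ℝ≥0} (hr : 0 < r) :
    HasFPowerSeriesOnBall F (ofScalars ℂ c) 0 r ↔
      ∀ z ∈ ball (0 : ℂ) r, HasSum (fun n => c n * z ^ n) (F z) := by
  constructor
  · intro hF z hz
    simpa [mul_comm] using hF.hasSum (y := z) (by rwa [eball_coe])
  · intro hF
    refine ⟨ENNReal.le_of_forall_nnreal_lt fun s hs => ?_, by simpa using hr, fun {z} hz => ?_⟩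
    · have hs' : ((s : ℝ) : ℂ) ∈ ball (0 : ℂ) r := by simpa using hs
      refine (ofScalars ℂ c).le_radius_of_tendsto (l := 0) ?_
      simpa [ofScalars_norm] using (hF _ hs').summable.tendsto_atTop_zero.norm
    · rw [eball_coe] at hz
      simpa [mul_comm] using hF z hz

theorem HasFPowerSeriesOnBall.deriv_ofScalars {F : ℂ → ℂ} {c : ℕ → ℂ} {r : ℝ≥0∞}
    (hF : HasFPowerSeriesOnBall F (ofScalars ℂ c) 0 r) :
    HasFPowerSeriesOnBall (deriv F) (ofScalars ℂ fun n => (n + 1) * c (n + 1)) 0 r := by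
  have h := (ContinuousLinearMap.apply ℂ ℂ (1 : ℂ)).comp_hasFPowerSeriesOnBall hF.fderiv
  convert h using 1
  · funext z
    simp
  · ext n : 1
    refine (mkPiRing_coeff_eq _ n).symm.trans ((congrArg _ ?_).trans (mkPiRing_coeff_eq _ n))
    simp only [FormalMultilinearSeries.coeff,
      ContinuousLinearMap.compFormalMultilinearSeries_apply,
      ContinuousLinearMap.compContinuousMultilinearMap_coe, Function.comp_apply,
      ContinuousLinearMap.apply_apply]
    rw [show (1 : Fin n → ℂ) = fun _ => 1 from rfl, derivSeries_apply_diag]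
    simp

theorem HasFPowerSeriesOnBall.deriv_add_mul_deriv_deriv {F : ℂ → ℂ} {c : ℕ → ℂ} {r : ℝ≥0}
    (hF : HasFPowerSeriesOnBall F (ofScalars ℂ c) 0 r) (α : ℂ) :
    HasFPowerSeriesOnBall (fun z => deriv F z + α * z * deriv (deriv F) z)
      (ofScalars ℂ fun n => (n + 1) * (1 + α * n) * c (n + 1)) 0 r := by
  have hr : 0 < r := by exact_mod_cast hF.r_pos
  have h1 := hF.deriv_ofScalars
  have h2 := h1.deriv_ofScalars
  rw [hasFPowerSeriesOnBall_ofScalars_iff hr] at h1 h2 ⊢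
  intro z hz
  have h2' : HasSum (fun n => α * n * (n + 1) * c (n + 1) * z ^ n)
      (α * z * deriv (deriv F) z) := by
    have h := (hasSum_nat_add_iff (f := fun n : ℕ => α * n * (n + 1) * c (n + 1) * z ^ n) 1).mp
      (((h2 z hz).mul_left (α * z)).congr_fun fun n => by push_cast; ring)
    simpa using h
  exact ((h1 z hz).add h2').congr_fun fun n => by ring

theorem DifferentiableOn.circleAverage_re {P : ℂ → ℂ} {c : ℂ} {R : ℝ}
    (hP : DifferentiableOn ℂ P (closedBall c |R|)) :
    Real.circleAverage (fun z => (P z).re) c R = (P c).re := by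
  rw [← (hP.diffContOnCl_ball subset_rfl).circleAverage]
  exact Complex.reCLM.circleAverage_comp_comm
    (hP.continuousOn.mono sphere_subset_closedBall).circleIntegrable'

theorem norm_coeff_mul_pow_le_re_of_lt {Q P : ℂ → ℂ} {d : ℕ → ℂ} {r : ℝ≥0}
    (hQ : HasFPowerSeriesOnBall Q (ofScalars ℂ d) 0 r) (hP : DifferentiableOn ℂ P (ball 0 r))
    (hle : ∀ z ∈ ball (0 : ℂ) r, ‖Q z‖ ≤ (P z).re) {R : ℝ} (hR : 0 < R) (hRr : R < r)
    (m : ℕ) : ‖d m‖ * R ^ m ≤ (P 0).re := by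
  lift R to ℝ≥0 using hR.le
  have hsub : closedBall (0 : ℂ) |(R : ℝ)| ⊆ ball 0 r := by
    rw [NNReal.abs_eq]
    exact closedBall_subset_ball hRr
  have hQdiff : DifferentiableOn ℂ Q (closedBall 0 |(R : ℝ)|) :=
    hQ.differentiableOn.mono (by rwa [eball_coe])
  have hcauchy : HasFPowerSeriesOnBall Q (cauchyPowerSeries Q 0 R) 0 R := by
    rw [NNReal.abs_eq] at hQdiff
    exact hQdiff.hasFPowerSeriesOnBall (mod_cast hR)
  have heq := hQ.hasFPowerSeriesAt.eq_formalMultilinearSeries hcauchy.hasFPowerSeriesAt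
  have hmono : Real.circleAverage (fun z => ‖Q z‖) 0 R ≤
      Real.circleAverage (fun z => (P z).re) 0 R := by
    have hPcont := (hP.mono hsub).continuousOn.mono sphere_subset_closedBall
    refine Real.circleAverage_mono ?_ ?_ fun z hz => hle z (hsub (sphere_subset_closedBall hz))
    · exact (hQdiff.continuousOn.mono sphere_subset_closedBall).norm.circleIntegrable'
    · exact (Complex.continuous_re.comp_continuousOn hPcont).circleIntegrable'
  calc ‖d m‖ * R ^ m = ‖cauchyPowerSeries Q 0 R m‖ * R ^ m := by rw [← heq, ofScalars_norm]
    _ ≤ Real.circleAverage (fun z => ‖Q z‖) 0 R * (R : ℝ)⁻¹ ^ m * R ^ m := by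
      gcongr
      simpa [Real.circleAverage_def, abs_of_pos hR] using norm_cauchyPowerSeries_le Q 0 R m
    _ = Real.circleAverage (fun z => ‖Q z‖) 0 R := by
      rw [mul_assoc, ← mul_pow, inv_mul_cancel₀ hR.ne', one_pow, mul_one]
    _ ≤ (P 0).re := hmono.trans_eq (hP.mono hsub).circleAverage_re

theorem norm_coeff_mul_pow_le_re {Q P : ℂ → ℂ} {d : ℕ → ℂ} {r : ℝ≥0}
    (hQ : HasFPowerSeriesOnBall Q (ofScalars ℂ d) 0 r) (hP : DifferentiableOn ℂ P (ball 0 r))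
    (hle : ∀ z ∈ ball (0 : ℂ) r, ‖Q z‖ ≤ (P z).re) (m : ℕ) : ‖d m‖ * r ^ m ≤ (P 0).re := by
  have hr : (0 : ℝ) < r := by exact_mod_cast hQ.r_pos
  have htend : Filter.Tendsto (fun R : ℝ => ‖d m‖ * R ^ m) (nhdsWithin r (Set.Iio r))
      (nhds (‖d m‖ * r ^ m)) :=
    ((continuous_const.mul (continuous_pow m)).tendsto _).mono_left nhdsWithin_le_nhds
  refine le_of_tendsto htend ?_
  filter_upwards [Ioo_mem_nhdsLT hr] with R hR
  exact norm_coeff_mul_pow_le_re_of_lt hQ hP hle hR.1 hR.2 m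

theorem deriv_sum_mul_pow (S : Finset ℕ) (c : ℕ → ℂ) (e : ℕ → ℕ) :
    deriv (fun w : ℂ => ∑ n ∈ S, c n * w ^ e n) =
      fun w => ∑ n ∈ S, c n * e n * w ^ (e n - 1) := by
  funext w
  rw [deriv_fun_sum fun n _ => (differentiableAt_pow _).const_mul _]
  refine sum_congr rfl fun n _ => ?_
  rw [deriv_const_mul _ (differentiableAt_pow _), deriv_pow_field, mul_assoc]

theorem deriv_add_mul_deriv_deriv_sum (S : Finset ℕ) (c : ℕ → ℂ) (α z : ℂ) :
    deriv (fun w => ∑ n ∈ S, c n * w ^ n) z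
        + α * z * deriv (deriv fun w => ∑ n ∈ S, c n * w ^ n) z
      = ∑ n ∈ S, n * (1 + α * (n - 1)) * c n * z ^ (n - 1) := by
  have h1 := deriv_sum_mul_pow S c fun n => n
  beta_reduce at h1
  rw [h1, deriv_sum_mul_pow S (fun n => c n * n) (· - 1), mul_sum, ← sum_add_distrib]
  refine sum_congr rfl fun n _ => ?_
  rcases n with _ | _ | k
  · simp
  · simp
  · simp only [Nat.add_sub_cancel, Nat.cast_add, Nat.cast_one]
    ring

theorem sum_Icc_pow_pred_lt_one {r : ℝ} (hr0 : 0 ≤ r) (hr : r < 1 / 2) (q : ℕ) :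
    ∑ n ∈ Icc 2 q, r ^ (n - 1) < 1 :=
  calc ∑ n ∈ Icc 2 q, r ^ (n - 1) = ∑ i ∈ Ico 1 q, r ^ i := by
        rw [← Ico_add_one_right_eq_Icc, ← sum_Ico_add' (fun n => r ^ (n - 1)) 1 q 1]
        simp
    _ ≤ r ^ 1 / (1 - r) := geom_sum_Ico_le_of_lt_one hr0 (by linarith)
    _ < 1 := by rw [pow_one, div_lt_one (by linarith)]; linarith

theorem norm_sum_Icc_mul_pow_pred_lt_one {e : ℕ → ℂ} {q : ℕ} (he : ∀ n ∈ Icc 2 q, ‖e n‖ ≤ 1)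
    {z : ℂ} (hz : ‖z‖ < 1 / 2) : ‖∑ n ∈ Icc 2 q, e n * z ^ (n - 1)‖ < 1 :=
  calc ‖∑ n ∈ Icc 2 q, e n * z ^ (n - 1)‖ ≤ ∑ n ∈ Icc 2 q, ‖z‖ ^ (n - 1) := by
        refine (norm_sum_le _ _).trans (sum_le_sum fun n hn => ?_)
        rw [norm_mul, norm_pow]
        exact mul_le_of_le_one_left (by positivity) (he n hn)
    _ < 1 := sum_Icc_pow_pred_lt_one (norm_nonneg z) hz q

theorem stmt_15_general (α : ℝ) (a b : ℕ → ℂ) (h g : ℂ → ℂ)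
    (ha1 : a 1 = 1)
    (hrep : ∀ z ∈ Metric.ball (0 : ℂ) 1, HasSum (fun n => a n * z ^ n) (h z))
    (grep : ∀ z ∈ Metric.ball (0 : ℂ) 1, HasSum (fun n => b n * z ^ n) (g z))
    (hf : ∀ z ∈ Metric.ball (0 : ℂ) 1,
        ‖deriv g z + (α : ℂ) * z * deriv (deriv g) z‖
          < (deriv h z + (α : ℂ) * z * deriv (deriv h) z).re) :
    ∀ q : ℕ, 2 ≤ q → ∀ z : ℂ, ‖z‖ < 1 / 2 →
      ‖deriv (fun w : ℂ => ∑ n ∈ Finset.Icc 2 q, b n * w ^ n) z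
          + (α : ℂ) * z *
            deriv (deriv (fun w : ℂ => ∑ n ∈ Finset.Icc 2 q, b n * w ^ n)) z‖ < 1 := by
  intro q _ z hz
  have hQ := ((hasFPowerSeriesOnBall_ofScalars_iff one_pos).mpr (by simpa using grep))
    |>.deriv_add_mul_deriv_deriv α
  have hP := ((hasFPowerSeriesOnBall_ofScalars_iff one_pos).mpr (by simpa using hrep))
    |>.deriv_add_mul_deriv_deriv α
  have hP0 : deriv h 0 = 1 := by
    simpa [ha1] using (hP.hasFPowerSeriesAt.coeff_zero fun _ => 0).symm
  have hcoeff (n : ℕ) : ‖(n + 1) * (1 + α * n) * b (n + 1)‖ ≤ 1 := by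
    have hPdiff := hP.differentiableOn
    rw [eball_coe] at hPdiff
    simpa [hP0] using
      norm_coeff_mul_pow_le_re hQ hPdiff (fun z hz => (hf z (by simpa using hz)).le) n
  rw [deriv_add_mul_deriv_deriv_sum]
  refine norm_sum_Icc_mul_pow_pred_lt_one (fun n hn => ?_) hz
  obtain ⟨k, rfl⟩ : ∃ k, n = k + 1 := ⟨n - 1, by grind⟩
  simpa using hcoeff k

/-- for f ∈ W⁰_H(α) and q ≥ 2, the section s_{1,q}(f) satisfies
the W⁰_H(α) condition for |z| < 1/2: |s_q(g)'(z) + αz s_q(g)''(z)| < 1. -/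
theorem stmt_15 (α : ℝ) (hα : 0 ≤ α) (a b : ℕ → ℂ) (h g : ℂ → ℂ)
    (ha0 : a 0 = 0) (ha1 : a 1 = 1) (hb0 : b 0 = 0) (hb1 : b 1 = 0)
    (hrep : ∀ z ∈ Metric.ball (0 : ℂ) 1, HasSum (fun n => a n * z ^ n) (h z))
    (grep : ∀ z ∈ Metric.ball (0 : ℂ) 1, HasSum (fun n => b n * z ^ n) (g z))
    (hf : ∀ z ∈ Metric.ball (0 : ℂ) 1,
        ‖deriv g z + (α : ℂ) * z * deriv (deriv g) z‖
          < (deriv h z + (α : ℂ) * z * deriv (deriv h) z).re) :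
    ∀ q : ℕ, 2 ≤ q → ∀ z : ℂ, ‖z‖ < 1 / 2 →
      ‖deriv (fun w : ℂ => ∑ n ∈ Finset.Icc 2 q, b n * w ^ n) z
          + (α : ℂ) * z *
            deriv (deriv (fun w : ℂ => ∑ n ∈ Finset.Icc 2 q, b n * w ^ n)) z‖ < 1 :=
  stmt_15_general α a b h g ha1 hrep grep hf
end
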